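/- For n = 2, the two-variable identity (∑_{m∈ℤ} q_1^m q^{m^2}) / ∏_{m=1}^∞ (1-q^m)^2 = ∏_{m=1}^∞ (1 + q_1 q^{2m-1})(1 + q_0 q^{2m-2}) / ((1-q^m)(1-q^{2m-1})) holds, where q = q_0 q_1. -/

import Mathlib

/-!
Put `Q = q²`. By induction on `N`, using a two-step `q`-Pascal recurrence for Gaussian
binomials, one gets the finite Jacobi triple product
`∏_{j ≤ N} (1 + q₁ q^(2j-1)) (1 + q₀ q^(2j-2)) = ∑_{|m| ≤ N} [2N, N+m]_Q q₁^m q^(m²)`.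
Now work modulo monomials of total degree `> D`. There all `(Q;Q)_a` with `a ≥ D` coincide, so
`[2B, B+m]_Q = (Q;Q)_(2B) / ((Q;Q)_(B-m) (Q;Q)_(B+m)) ≡ 1 / (Q;Q)_D` as soon as `|m| ≤ D ≤ B/2`.
Since `(q;q)_(2D) = (Q;Q)_D (q;Q)_D`, dividing by `(q;Q)_B` turns this into `1 / (q;q)_B`, which
matches the corresponding term on the left; the terms with `|m| > D` vanish to this order, because
`q₁^m q^(m²)` has degree `2m² + m`.
-/

open Finset MvPowerSeries

section GaussianBinomial

variable {R : Type*} [CommRing R] (Q : R)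

def qPochhammer (n : ℕ) : R := ∏ j ∈ Icc 1 n, (1 - Q ^ j)

/-- The Gaussian binomial coefficient `[n, k]_Q`, as a function of `k ∈ ℤ` vanishing outside
`[0, n]`. -/
def gaussBinom : ℕ → ℤ → R
  | 0, k => if k = 0 then 1 else 0
  | n + 1, k => gaussBinom n (k - 1) + Q ^ k.toNat * gaussBinom n k

@[simp]
lemma qPochhammer_zero : qPochhammer Q 0 = 1 := by simp [qPochhammer]

lemma qPochhammer_succ (n : ℕ) : qPochhammer Q (n + 1) = qPochhammer Q n * (1 - Q ^ (n + 1)) :=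
  prod_Icc_succ_top (by omega) _

lemma qPochhammer_two_mul (n : ℕ) :
    qPochhammer Q (2 * n) = qPochhammer (Q ^ 2) n * ∏ j ∈ Icc 1 n, (1 - Q ^ (2 * j - 1)) := by
  induction n with
  | zero => simp
  | succ n ih =>
    rw [show 2 * (n + 1) = 2 * n + 1 + 1 by ring, qPochhammer_succ, qPochhammer_succ, ih,
      qPochhammer_succ, prod_Icc_succ_top (by omega), ← pow_mul,
      show 2 * (n + 1) - 1 = 2 * n + 1 by omega]
    ring

lemma gaussBinom_succ (n : ℕ) (k : ℤ) :
    gaussBinom Q (n + 1) k = gaussBinom Q n (k - 1) + Q ^ k.toNat * gaussBinom Q n k := rfl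

lemma gaussBinom_of_neg {n : ℕ} {k : ℤ} (hk : k < 0) : gaussBinom Q n k = 0 := by
  induction n generalizing k with
  | zero => simp [gaussBinom, hk.ne]
  | succ n ih => rw [gaussBinom_succ, ih (by omega), ih hk, mul_zero, add_zero]

lemma gaussBinom_of_lt {n : ℕ} {k : ℤ} (hk : n < k) : gaussBinom Q n k = 0 := by
  induction n generalizing k with
  | zero => simp only [gaussBinom, ite_eq_right_iff]; omega
  | succ n ih => rw [gaussBinom_succ, ih (by omega), ih (by omega), mul_zero, add_zero]

lemma gaussBinom_two_mul_of_lt_natAbs {N : ℕ} {m : ℤ} (hm : N < m.natAbs) :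
    gaussBinom Q (2 * N) (N + m) = 0 := by
  rcases lt_or_ge m 0 with hneg | hnonneg
  · exact gaussBinom_of_neg Q (by omega)
  · exact gaussBinom_of_lt Q (by push_cast; omega)

@[simp]
lemma gaussBinom_zero_right (n : ℕ) : gaussBinom Q n 0 = 1 := by
  induction n with
  | zero => simp [gaussBinom]
  | succ n ih => simp [gaussBinom_succ, ih, gaussBinom_of_neg]

lemma one_sub_pow_mul_gaussBinom (n : ℕ) (k : ℤ) :
    (1 - Q ^ k.toNat) * gaussBinom Q n k =
      (1 - Q ^ ((n : ℤ) + 1 - k).toNat) * gaussBinom Q n (k - 1) := by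
  induction n generalizing k with
  | zero =>
    by_cases h0 : k = 0
    · simp [gaussBinom, h0]
    by_cases h1 : k = 1
    · simp [gaussBinom, h1]
    · simp [gaussBinom, h0, sub_eq_zero, h1]
  | succ n ih =>
    have hexp : Q ^ k.toNat * Q ^ ((n : ℤ) + 1 - k).toNat * gaussBinom Q n (k - 1) =
        Q ^ (k - 1).toNat * Q ^ ((n : ℤ) + 2 - k).toNat * gaussBinom Q n (k - 1) := by
      rcases lt_or_ge (k - 1) 0 with hk | hk
      · rw [gaussBinom_of_neg Q hk, mul_zero, mul_zero]
      rcases lt_or_ge (n : ℤ) (k - 1) with hk' | hk'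
      · rw [gaussBinom_of_lt Q hk', mul_zero, mul_zero]
      rw [← pow_add, ← pow_add]
      congr 2
      omega
    have h2 := ih (k - 1)
    rw [show (n : ℤ) + 1 - (k - 1) = n + 2 - k by ring, show k - 1 - 1 = k - 2 by ring] at h2
    rw [gaussBinom_succ, gaussBinom_succ, show k - 1 - 1 = k - 2 by ring]
    push_cast
    rw [show (n : ℤ) + 1 + 1 - k = n + 2 - k by ring]
    linear_combination Q ^ k.toNat * ih k + h2 - hexp

lemma gaussBinom_succ' (n : ℕ) (k : ℤ) :
    gaussBinom Q (n + 1) k =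
      Q ^ ((n : ℤ) + 1 - k).toNat * gaussBinom Q n (k - 1) + gaussBinom Q n k := by
  linear_combination gaussBinom_succ Q n k - one_sub_pow_mul_gaussBinom Q n k

lemma gaussBinom_add_two (n : ℕ) (k : ℤ) :
    gaussBinom Q (n + 2) k = Q ^ ((n : ℤ) + 2 - k).toNat * gaussBinom Q n (k - 2) +
      (1 + Q ^ (n + 1)) * gaussBinom Q n (k - 1) + Q ^ k.toNat * gaussBinom Q n k := by
  have hexp : Q ^ ((n : ℤ) + 2 - k).toNat * Q ^ (k - 1).toNat * gaussBinom Q n (k - 1) =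
      Q ^ (n + 1) * gaussBinom Q n (k - 1) := by
    rcases lt_or_ge (k - 1) 0 with hk | hk
    · rw [gaussBinom_of_neg Q hk, mul_zero, mul_zero]
    rcases lt_or_ge (n : ℤ) (k - 1) with hk' | hk'
    · rw [gaussBinom_of_lt Q hk', mul_zero, mul_zero]
    rw [← pow_add]
    congr 2
    omega
  rw [gaussBinom_succ', gaussBinom_succ, gaussBinom_succ, show k - 1 - 1 = k - 2 by ring]
  push_cast
  rw [show (n : ℤ) + 1 + 1 - k = n + 2 - k by ring]
  linear_combination hexp

lemma gaussBinom_mul_qPochhammer {n k : ℕ} (h : k ≤ n) :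
    gaussBinom Q n k * qPochhammer Q k * qPochhammer Q (n - k) = qPochhammer Q n := by
  induction k with
  | zero => simp
  | succ k ih =>
    have hratio := one_sub_pow_mul_gaussBinom Q n (k + 1)
    rw [show ((n : ℤ) + 1 - (k + 1)).toNat = n - k by omega, add_sub_cancel_right,
      show ((k : ℤ) + 1).toNat = k + 1 by omega] at hratio
    rw [← ih (by omega), show n - k = n - (k + 1) + 1 by omega, qPochhammer_succ,
      qPochhammer_succ, show n - (k + 1) + 1 = n - k by omega]
    push_cast
    linear_combination qPochhammer Q k * qPochhammer Q (n - (k + 1)) * hratio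

end GaussianBinomial

lemma sum_Icc_add_eq_of_eq_zero {M : Type*} [AddCommMonoid M] (f : ℤ → M) (a b c : ℤ)
    {s : Finset ℤ} (hs : Icc (a + c) (b + c) ⊆ s)
    (hf : ∀ m ∈ s, m ∉ Icc (a + c) (b + c) → f m = 0) :
    ∑ m ∈ Icc a b, f (m + c) = ∑ m ∈ s, f m := by
  rw [← sum_subset hs hf, ← map_add_right_Icc, sum_map]
  rfl

lemma mk_prod_Icc_one_sub_of_mem {S : Type*} [CommRing S] {I : Ideal S} (f : ℕ → S) {a b : ℕ}
    (hab : a ≤ b) (hf : ∀ j, a < j → f j ∈ I) :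
    Ideal.Quotient.mk I (∏ j ∈ Icc 1 b, (1 - f j)) =
      Ideal.Quotient.mk I (∏ j ∈ Icc 1 a, (1 - f j)) := by
  induction b, hab using Nat.le_induction with
  | base => rfl
  | succ b hab ih =>
    rw [prod_Icc_succ_top (by omega), map_mul, ih, map_sub, map_one,
      Ideal.Quotient.eq_zero_iff_mem.mpr (hf _ (by omega)), sub_zero, mul_one]

namespace MvPowerSeries

section CommRing

variable (σ R : Type*) [CommRing R]

def orderIdeal (n : ℕ) : Ideal (MvPowerSeries σ R) where
  carrier := {f | (n : ℕ∞) ≤ f.order}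
  add_mem' hf hg := (le_min hf hg).trans min_order_le_add
  zero_mem' := by simp
  smul_mem' _ _ hf := hf.trans (le_add_self.trans le_order_mul)

variable {σ R}

lemma mem_orderIdeal {n : ℕ} {f : MvPowerSeries σ R} :
    f ∈ orderIdeal σ R n ↔ (n : ℕ∞) ≤ f.order := Iff.rfl

lemma coeff_eq_of_mk_orderIdeal_eq {n : ℕ} {f g : MvPowerSeries σ R}
    (h : Ideal.Quotient.mk (orderIdeal σ R n) f = Ideal.Quotient.mk _ g) {d : σ →₀ ℕ}
    (hd : d.degree < n) : coeff d f = coeff d g := by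
  rw [← sub_eq_zero, ← map_sub]
  exact coeff_of_lt_order ((Nat.cast_lt.mpr hd).trans_le (Ideal.Quotient.eq.mp h))

variable {f : MvPowerSeries σ R}

lemma pow_mem_orderIdeal (hf : constantCoeff f = 0) {n j : ℕ} (h : n ≤ j) :
    f ^ j ∈ orderIdeal σ R n :=
  (Nat.cast_le.mpr h).trans (le_order_pow_of_constantCoeff_eq_zero j hf)

lemma constantCoeff_one_sub_pow (hf : constantCoeff f = 0) {j : ℕ} (hj : j ≠ 0) :
    constantCoeff (1 - f ^ j) = 1 := by
  simp [hf, hj]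

lemma constantCoeff_qPochhammer (hf : constantCoeff f = 0) (n : ℕ) :
    constantCoeff (qPochhammer f n) = 1 := by
  rw [qPochhammer, map_prod]
  exact prod_eq_one fun j hj => constantCoeff_one_sub_pow hf (by simp at hj; omega)

lemma mk_qPochhammer_of_le (hf : constantCoeff f = 0) {D a : ℕ} (ha : D ≤ a) :
    Ideal.Quotient.mk (orderIdeal σ R (D + 1)) (qPochhammer f a) =
      Ideal.Quotient.mk (orderIdeal σ R (D + 1)) (qPochhammer f D) :=
  mk_prod_Icc_one_sub_of_mem _ ha fun _ hj => pow_mem_orderIdeal hf hj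

end CommRing

section Field

variable {σ K : Type*} [Field K]

lemma prod_inv_mul_prod_eq_one {ι : Type*} {s : Finset ι} {f : ι → MvPowerSeries σ K}
    (hf : ∀ i ∈ s, constantCoeff (f i) = 1) : (∏ i ∈ s, (f i)⁻¹) * ∏ i ∈ s, f i = 1 := by
  rw [← prod_mul_distrib]
  exact prod_eq_one fun i hi => MvPowerSeries.inv_mul_cancel _ (by simp [hf i hi])

lemma mk_gaussBinom_mul_mk_qPochhammer {f : MvPowerSeries σ K} (hf : constantCoeff f = 0)
    {D n k : ℕ} (hk : D ≤ k) (hnk : D + k ≤ n) :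
    Ideal.Quotient.mk (orderIdeal σ K (D + 1)) (gaussBinom f n k) *
      Ideal.Quotient.mk (orderIdeal σ K (D + 1)) (qPochhammer f D) = 1 := by
  set π := Ideal.Quotient.mk (orderIdeal σ K (D + 1)) with hπ
  have hunit : π (qPochhammer f D) * π (qPochhammer f D)⁻¹ = 1 := by
    rw [← map_mul, MvPowerSeries.mul_inv_cancel _ (by simp [constantCoeff_qPochhammer hf]),
      map_one]
  have h := congrArg π (gaussBinom_mul_qPochhammer f (show k ≤ n by omega))
  rw [map_mul, map_mul, mk_qPochhammer_of_le hf hk,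
    mk_qPochhammer_of_le hf (a := n - k) (by omega), mk_qPochhammer_of_le hf (a := n) (by omega),
    ← hπ] at h
  calc _ = π (gaussBinom f n k) * π (qPochhammer f D) * π (qPochhammer f D) *
        π (qPochhammer f D)⁻¹ := by rw [mul_assoc _ (π _), hunit, mul_one]
    _ = 1 := by rw [h, hunit]

end Field

end MvPowerSeries

namespace JacobiTriple

variable {R : Type*}

local notation "q" => (X 0 * X 1 : MvPowerSeries (ZMod 2) R)

section CommRing

variable [CommRing R]

/-- The monomial `q₁ ^ m * q ^ (m ^ 2)`, where `q = q₀ q₁`. -/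
noncomputable def theta (m : ℤ) : MvPowerSeries (ZMod 2) R :=
  monomial (Finsupp.single 0 (m * m).toNat + Finsupp.single 1 (m * m + m).toNat) 1

lemma q_pow (j : ℕ) : q ^ j = monomial (Finsupp.single 0 j + Finsupp.single 1 j) (1 : R) := by
  rw [mul_pow, X_pow_eq, X_pow_eq, monomial_mul_monomial, one_mul]

lemma X_one_mul_theta {n : ℕ} {m : ℤ} (h : m ≤ n) :
    X 1 * q ^ (2 * n + 1) * theta m = (q ^ 2) ^ ((n : ℤ) - m).toNat * theta (m + 1) := by
  have hsq : (m + 1) * (m + 1) = m * m + 2 * m + 1 := by ring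
  have h0 : 0 ≤ m * m := mul_self_nonneg m
  have h1 : 0 ≤ m * m + m := by nlinarith
  have h2 : 0 ≤ m * m + 2 * m + 1 := by nlinarith
  have h3 : 0 ≤ m * m + 2 * m + 1 + (m + 1) := by nlinarith
  rw [← pow_mul, q_pow, q_pow, theta, theta, X, monomial_mul_monomial, monomial_mul_monomial,
    monomial_mul_monomial, hsq, one_mul, one_mul]
  refine congrArg (monomial · (1 : R)) (Finsupp.ext fun i => ?_)
  generalize m * m = s at h0 h1 h2 h3
  obtain rfl | rfl : i = 0 ∨ i = 1 := by decide +revert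
  all_goals simp [-Finsupp.single_mul]; omega

lemma X_zero_mul_theta {n : ℕ} {m : ℤ} (h : -n ≤ m) :
    X 0 * q ^ (2 * n) * theta m = (q ^ 2) ^ ((n : ℤ) + m).toNat * theta (m - 1) := by
  have hsq : (m - 1) * (m - 1) = m * m - 2 * m + 1 := by ring
  have h0 : 0 ≤ m * m := mul_self_nonneg m
  have h1 : 0 ≤ m * m - m := by nlinarith
  have h2 : 0 ≤ m * m + m := by nlinarith
  have h3 : 0 ≤ m * m - 2 * m + 1 := by nlinarith
  have h4 : 0 ≤ m * m - 2 * m + 1 + (m - 1) := by nlinarith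
  rw [← pow_mul, q_pow, q_pow, theta, theta, X, monomial_mul_monomial, monomial_mul_monomial,
    monomial_mul_monomial, hsq, one_mul, one_mul]
  refine congrArg (monomial · (1 : R)) (Finsupp.ext fun i => ?_)
  generalize m * m = s at h0 h1 h2 h3 h4
  obtain rfl | rfl : i = 0 ∨ i = 1 := by decide +revert
  all_goals simp [-Finsupp.single_mul]; omega

lemma theta_mul_jacobi_factor {N : ℕ} {m : ℤ} (h : m.natAbs ≤ N) :
    theta m * ((1 + X 1 * q ^ (2 * (N + 1) - 1)) * (1 + X 0 * q ^ (2 * (N + 1) - 2))) =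
      (1 + (q ^ 2) ^ (2 * N + 1)) * theta m + (q ^ 2) ^ ((N : ℤ) - m).toNat * theta (m + 1) +
        (q ^ 2) ^ ((N : ℤ) + m).toNat * theta (m - 1) := by
  rw [← X_one_mul_theta (by omega), ← X_zero_mul_theta (by omega),
    show 2 * (N + 1) - 1 = 2 * N + 1 by omega, show 2 * (N + 1) - 2 = 2 * N by omega]
  have hX : (X 1 * q ^ (2 * N + 1)) * (X 0 * q ^ (2 * N)) = (q ^ 2) ^ (2 * N + 1) := by ring
  linear_combination theta m * hX

lemma sum_gaussBinom_mul_theta_mul_jacobi_factor (N : ℕ) :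
    (∑ m ∈ Icc (-(N : ℤ)) N, gaussBinom (q ^ 2) (2 * N) (N + m) * theta m) *
        ((1 + X 1 * q ^ (2 * (N + 1) - 1)) * (1 + X 0 * q ^ (2 * (N + 1) - 2))) =
      ∑ m ∈ Icc (-((N : ℤ) + 1)) (N + 1), gaussBinom (q ^ 2) (2 * N + 2) (N + 1 + m) * theta m := by
  set G := fun m : ℤ => gaussBinom (q ^ 2) (2 * N) (N + m)
  have hG : ∀ m : ℤ, N < m.natAbs → G m = 0 := fun m hm => gaussBinom_two_mul_of_lt_natAbs _ hm
  rw [sum_mul]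
  calc _ = ∑ m ∈ Icc (-(N : ℤ)) N, ((1 + (q ^ 2) ^ (2 * N + 1)) * G m * theta m +
          (q ^ 2) ^ ((N : ℤ) - m).toNat * G m * theta (m + 1) +
          (q ^ 2) ^ ((N : ℤ) + m).toNat * G m * theta (m - 1)) :=
        sum_congr rfl fun m hm => by
          rw [mul_assoc, theta_mul_jacobi_factor (by simp at hm; omega)]
          ring
    _ = ∑ m ∈ Icc (-((N : ℤ) + 1)) (N + 1), ((1 + (q ^ 2) ^ (2 * N + 1)) * G m * theta m +
          (q ^ 2) ^ ((N : ℤ) + 1 - m).toNat * G (m - 1) * theta m +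
          (q ^ 2) ^ ((N : ℤ) + 1 + m).toNat * G (m + 1) * theta m) := by
        simp only [sum_add_distrib]
        congr 1
        congr 1
        · refine sum_subset (fun m hm => by simp only [mem_Icc] at hm ⊢; omega) fun m _ hm => ?_
          rw [hG m (by simp only [mem_Icc] at hm; omega), mul_zero, zero_mul]
        · refine (sum_congr rfl fun m _ => ?_).trans
            (sum_Icc_add_eq_of_eq_zero _ _ _ 1 (fun m hm => ?_) fun m hm hm' => ?_)
          · rw [show (N : ℤ) + 1 - (m + 1) = N - m by ring, add_sub_cancel_right]
          · simp only [mem_Icc] at hm ⊢; omega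
          · rw [hG (m - 1) (by simp only [mem_Icc] at hm hm'; omega), mul_zero, zero_mul]
        · refine (sum_congr rfl fun m _ => ?_).trans
            (sum_Icc_add_eq_of_eq_zero _ _ _ (-1) (fun m hm => ?_) fun m hm hm' => ?_)
          · rw [show (N : ℤ) + 1 + (m + -1) = N + m by ring, neg_add_cancel_right,
              ← sub_eq_add_neg]
          · simp only [mem_Icc] at hm ⊢; omega
          · rw [hG (m + 1) (by simp only [mem_Icc] at hm hm'; omega), mul_zero, zero_mul]
    _ = _ := sum_congr rfl fun m _ => by
        rw [gaussBinom_add_two]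
        simp only [G]
        push_cast
        ring_nf

theorem jacobi_triple_product_finite (N : ℕ) :
    ∏ j ∈ Icc 1 N, ((1 + X 1 * q ^ (2 * j - 1)) * (1 + X 0 * q ^ (2 * j - 2))) =
      ∑ m ∈ Icc (-(N : ℤ)) N, gaussBinom (q ^ 2) (2 * N) (N + m) * theta m := by
  induction N with
  | zero => simp [theta]
  | succ N ih =>
    rw [prod_Icc_succ_top (by omega), ih, sum_gaussBinom_mul_theta_mul_jacobi_factor]
    push_cast
    ring_nf

lemma theta_mem_orderIdeal {n : ℕ} {m : ℤ} (h : n ≤ m.natAbs) :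
    theta m ∈ orderIdeal (ZMod 2) R n := by
  have hsq := Int.natAbs_le_self_sq m
  have hm : 0 ≤ m * m + m := by nlinarith
  classical
  rw [mem_orderIdeal, theta, order_monomial]
  split_ifs
  · exact le_top
  · rw [map_add, Finsupp.degree_single, Finsupp.degree_single, Nat.cast_le]
    rw [sq] at hsq
    omega

end CommRing

variable [Field R]

lemma mk_inv_prod_eq_gaussBinom_mul {D B : ℕ} {m : ℤ} (hm : m.natAbs ≤ D) (hB : 2 * D ≤ B) :
    Ideal.Quotient.mk (orderIdeal (ZMod 2) R (D + 1)) (∏ t ∈ Icc 1 B, (1 - q ^ t)⁻¹) =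
      Ideal.Quotient.mk (orderIdeal (ZMod 2) R (D + 1)) (gaussBinom (q ^ 2) (2 * B) (B + m)) *
        Ideal.Quotient.mk (orderIdeal (ZMod 2) R (D + 1))
          (∏ t ∈ Icc 1 B, (1 - q ^ (2 * t - 1))⁻¹) := by
  set π := Ideal.Quotient.mk (orderIdeal (ZMod 2) R (D + 1))
  set G := π (gaussBinom (q ^ 2) (2 * B) (B + m))
  set S := π (∏ t ∈ Icc 1 B, (1 - q ^ (2 * t - 1))⁻¹)
  have hq : constantCoeff q = 0 := by simp
  have hmem : ∀ j, D < j → q ^ j ∈ orderIdeal (ZMod 2) R (D + 1) :=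
    fun j hj => pow_mem_orderIdeal hq hj
  set p := π (qPochhammer (q ^ 2) D)
  set o := π (∏ j ∈ Icc 1 D, (1 - q ^ (2 * j - 1)))
  have hG : G * p = 1 := by
    have h := mk_gaussBinom_mul_mk_qPochhammer (f := q ^ 2) (by simp) (D := D) (n := 2 * B)
      (k := (B + m).toNat) (by omega) (by omega)
    rwa [Int.toNat_of_nonneg (by omega)] at h
  have hT : π (∏ t ∈ Icc 1 B, (1 - q ^ t)⁻¹) * (p * o) = 1 := by
    have hPB : π (qPochhammer q B) = p * o := by
      rw [← map_mul, ← qPochhammer_two_mul]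
      exact mk_prod_Icc_one_sub_of_mem _ hB fun j hj => hmem j (by omega)
    rw [← hPB, ← map_mul, qPochhammer, prod_inv_mul_prod_eq_one fun t ht =>
      constantCoeff_one_sub_pow hq (by simp at ht; omega), map_one]
  have hS : S * o = 1 := by
    have hOB : π (∏ j ∈ Icc 1 B, (1 - q ^ (2 * j - 1))) = o :=
      mk_prod_Icc_one_sub_of_mem _ (by omega) fun j hj => hmem _ (by omega)
    rw [← hOB, ← map_mul, prod_inv_mul_prod_eq_one fun t ht =>
      constantCoeff_one_sub_pow hq (by simp at ht; omega), map_one]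
  exact left_inv_eq_right_inv hT (by linear_combination S * o * hG + hS)

end JacobiTriple

/-- For `n = 2`: `(∑_{m∈ℤ} q_1^m q^{m²}) / ∏_{m≥1}(1-q^m)²
  = ∏_{m≥1} (1+q_1 q^{2m-1})(1+q_0 q^{2m-2}) / ((1-q^m)(1-q^{2m-1}))` with `q = q_0 q_1`,
expressed coefficient-wise with the infinite products and the bilateral sum truncated.
The summand `q_1^m q^{m²}` is the monomial `q_0^{m²} q_1^{m²+m}`. -/
theorem n2_theta_identity (k : ZMod 2 →₀ ℕ) :
    ∃ B0 : ℕ, ∀ B ≥ B0,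
      MvPowerSeries.coeff (R := ℚ) k
        ((∑ m ∈ Finset.Icc (-(B : ℤ)) (B : ℤ),
            MvPowerSeries.monomial (R := ℚ)
              (Finsupp.single (0 : ZMod 2) (m * m).toNat +
                Finsupp.single (1 : ZMod 2) (m * m + m).toNat) 1) *
          (∏ t ∈ Finset.Icc 1 B,
            (1 - (MvPowerSeries.X (0 : ZMod 2) * MvPowerSeries.X (1 : ZMod 2)) ^ t)⁻¹) ^ 2)
      = MvPowerSeries.coeff (R := ℚ) k
          (∏ m ∈ Finset.Icc 1 B,
            ((1 + MvPowerSeries.X (1 : ZMod 2) *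
                (MvPowerSeries.X (0 : ZMod 2) * MvPowerSeries.X (1 : ZMod 2)) ^ (2 * m - 1)) *
             (1 + MvPowerSeries.X (0 : ZMod 2) *
                (MvPowerSeries.X (0 : ZMod 2) * MvPowerSeries.X (1 : ZMod 2)) ^ (2 * m - 2)) *
             (1 - (MvPowerSeries.X (0 : ZMod 2) * MvPowerSeries.X (1 : ZMod 2)) ^ m)⁻¹ *
             (1 - (MvPowerSeries.X (0 : ZMod 2) * MvPowerSeries.X (1 : ZMod 2)) ^ (2 * m - 1))⁻¹)) := by
  refine ⟨2 * k.degree, fun B hB => ?_⟩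
  rw [prod_mul_distrib, prod_mul_distrib, JacobiTriple.jacobi_triple_product_finite]
  refine coeff_eq_of_mk_orderIdeal_eq ?_ (Nat.lt_add_one k.degree)
  simp only [← JacobiTriple.theta.eq_1, map_mul, map_sum, map_pow, sum_mul]
  refine sum_congr rfl fun m _ => ?_
  by_cases hm : m.natAbs ≤ k.degree
  · rw [JacobiTriple.mk_inv_prod_eq_gaussBinom_mul hm hB]
    ring
  · rw [Ideal.Quotient.eq_zero_iff_mem.mpr (JacobiTriple.theta_mem_orderIdeal (by omega))]
    ring
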